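/- For every n ≥ 3 there exists an irreducible λ-quiddity of length n on Z × Z; that is, a tuple ((a_1,b_1),...,(a_n,b_n)) ∈ (Z×Z)^n with M_n = ±Id over Z×Z which cannot be written, up to cyclic rotation and reversal of indices, as (c_1,...,c_{n+2-l}) ⊕ (d_1,...,d_l) where 3 ≤ l ≤ n-1 and (d_1,...,d_l) satisfies M_l = ±Id over Z×Z. Explicitly, for n ≥ 4 one can take the first coordinates (1, n-2, 1, 2,...,2) and the second coordinates (2, 1, n-2, 1, 2,...,2). -/

import Mathlib

/-!
If `l` is reducible, say `oplus lc lb` is a rotation of `l` or of its reverse with `lb` a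
λ-quiddity, then the interior `b₂ ⋯ b_{m-1}` of `lb` survives unchanged as a cyclic factor of
length between `1` and `n - 3`; since `M(lb) = ±1` its continuant, the corner entry of its matrix,
is a unit. Over `ℤ × ℤ` this has to happen in both coordinates at once. The first coordinates
`(1, n-2, 1, 2, …, 2)` form a quiddity over `ℤ` whose short cyclic factors all have continuant
`≥ 1`, with equality only for the factors starting at the third entry or ending at the first;
the second coordinates are the same cyclic word shifted by one place, and no factor satisfies
both conditions.
-/

open Matrix

/-- `Mlist [a₁,…,aₙ] = M(aₙ)⋯M(a₁)` where `M(a) = [[a,-1],[1,0]]`. -/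
def Mlist {A : Type*} [CommRing A] (l : List A) : Matrix (Fin 2) (Fin 2) A :=
  ((l.map (fun a => !![a, -1; 1, 0])).reverse).prod

/-- The continuant `K` (tridiagonal determinant), with `K [] = 1`. -/
def cont {A : Type*} [CommRing A] : List A → A
  | [] => 1
  | [a] => a
  | a :: b :: l => a * cont (b :: l) - cont l

/-- `(a₁,…,aₙ) ⊕ (b₁,…,bₘ) = (a₁+bₘ, a₂,…,aₙ₋₁, aₙ+b₁, b₂,…,bₘ₋₁)` (for lists of length ≥ 2). -/
def oplus {A : Type*} [CommRing A] (la lb : List A) : List A :=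
  match la, lb with
  | a1 :: ta, b1 :: tb =>
      (a1 + tb.getLastD b1) :: (ta.dropLast ++ ((ta.getLastD a1 + b1) :: tb.dropLast))
  | _, _ => []

section General

variable {A : Type*} [CommRing A]

def IsQuiddity (l : List A) : Prop := Mlist l = 1 ∨ Mlist l = -1

def IsReducible (l : List A) : Prop :=
  ∃ (lb lc : List A), 3 ≤ lb.length ∧ 3 ≤ lc.length ∧ IsQuiddity lb ∧
    ∃ j : ℕ, oplus lc lb = l.rotate j ∨ oplus lc lb = l.reverse.rotate j

@[simp] lemma Mlist_nil : Mlist ([] : List A) = 1 := rfl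

lemma Mlist_cons (a : A) (t : List A) : Mlist (a :: t) = Mlist t * !![a, -1; 1, 0] := by
  simp [Mlist]

lemma Mlist_singleton (a : A) : Mlist [a] = !![a, -1; 1, 0] := by
  simp [Mlist]

lemma Mlist_append (u v : List A) : Mlist (u ++ v) = Mlist v * Mlist u := by
  simp [Mlist]

lemma Mlist_cons_apply (a : A) : ∀ t : List A,
    Mlist (a :: t) 0 0 = cont (a :: t) ∧ Mlist (a :: t) 0 1 = -cont t
  | [] => by simp [Mlist_cons, cont]
  | b :: t => by
    obtain ⟨h0, h1⟩ := Mlist_cons_apply b t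
    rw [Mlist_cons a]
    simp only [Fin.isValue, Matrix.mul_apply, of_apply, cons_val', cons_val_zero,
      cons_val_fin_one, Fin.sum_univ_two, h0, h1, cons_val_one, mul_one, cont, mul_neg, mul_zero,
      add_zero, and_true]
    ring

lemma Mlist_apply_zero_zero (w : List A) : Mlist w 0 0 = cont w := by
  cases w with
  | nil => simp [cont]
  | cons a t => exact (Mlist_cons_apply a t).1

lemma Mlist_cons_append_singleton_apply_one_one (b c : A) (w : List A) :
    Mlist (b :: (w ++ [c])) 1 1 = -cont w := by
  rw [Mlist_cons, Mlist_append, Mlist_singleton, ← Mlist_apply_zero_zero]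
  simp [Matrix.mul_apply, Fin.sum_univ_two, Matrix.vecMul, dotProduct]

lemma IsQuiddity.isUnit_cont_dropLast {b : A} {t : List A} (h : IsQuiddity (b :: t)) :
    IsUnit (cont t.dropLast) := by
  rcases t.eq_nil_or_concat' with rfl | ⟨w, c, rfl⟩
  · simp [cont]
  rw [List.dropLast_concat, ← IsUnit.neg_iff, ← Mlist_cons_append_singleton_apply_one_one b c]
  rcases h with h | h <;> simp [h]

lemma Mlist_rotate_of_eq_neg_one {l : List A} (h : Mlist l = -1) (k : ℕ) :
    Mlist (l.rotate k) = -1 := by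
  induction k with
  | zero => simpa
  | succ k ih =>
    rw [← List.rotate_rotate]
    rcases hl : l.rotate k with _ | ⟨a, t⟩
    · simpa [hl] using ih
    rw [hl, ← List.singleton_append, Mlist_append] at ih
    rw [List.rotate_cons_succ, List.rotate_zero, Mlist_append, ← neg_eq_iff_eq_neg,
      ← mul_neg, mul_eq_one_comm, neg_mul, ih, neg_neg]

lemma Mlist_map {B : Type*} [CommRing B] (f : A →+* B) (w : List A) :
    Mlist (w.map f) = f.mapMatrix (Mlist w) := by
  induction w with
  | nil => simp
  | cons a t ih =>
    rw [List.map_cons, Mlist_cons, Mlist_cons, ih, map_mul]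
    congr 1
    ext i j
    fin_cases i <;> fin_cases j <;> simp

lemma cont_map {B : Type*} [CommRing B] (f : A →+* B) (w : List A) :
    cont (w.map f) = f (cont w) := by
  rw [← Mlist_apply_zero_zero, Mlist_map, ← Mlist_apply_zero_zero]
  rfl

lemma Mlist_replicate_two (k : ℕ) :
    Mlist (List.replicate k (2 : A)) = !![(k : A) + 1, -k; k, 1 - k] := by
  induction k with
  | zero => ext i j; fin_cases i <;> fin_cases j <;> simp
  | succ k ih =>
    rw [List.replicate_succ, Mlist_cons, ih]
    ext i j
    fin_cases i <;> fin_cases j <;> simp [Matrix.mul_apply, Fin.sum_univ_two] <;> ring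

lemma oplus_cons_cons_eq_append (c b : A) {tc : List A} (htc : tc ≠ []) (tb : List A) :
    ∃ u : List A, u.length = tc.length + 1 ∧ oplus (c :: tc) (b :: tb) = u ++ tb.dropLast :=
  ⟨(c + tb.getLastD b) :: (tc.dropLast ++ [tc.getLastD c + b]), by
    have := List.length_pos_iff.mpr htc
    simp only [List.length_cons, List.length_append, List.length_dropLast, List.length_nil]
    omega, by simp [oplus]⟩

lemma take_rotate_of_append_eq_rotate {α : Type*} {u w l : List α} {j : ℕ}
    (h : u ++ w = l.rotate j) : (l.rotate (j + u.length)).take w.length = w := by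
  rw [← List.rotate_rotate, ← h, List.rotate_eq_drop_append_take (by simp), List.drop_left,
    List.take_left]

lemma IsReducible.exists_isUnit_cont_window {l : List A} (h : IsReducible l) :
    ∃ i k, 1 ≤ k ∧ k + 3 ≤ l.length ∧
      (IsUnit (cont ((l.rotate i).take k)) ∨ IsUnit (cont ((l.reverse.rotate i).take k))) := by
  obtain ⟨_ | ⟨b, tb⟩, _ | ⟨c, tc⟩, hlb, hlc, hq, j, hj⟩ := h
  · simp at hlb
  · simp at hlb
  · simp at hlc
  simp only [List.length_cons] at hlb hlc
  obtain ⟨u, hu, hsplit⟩ := oplus_cons_cons_eq_append c b (tc := tc) (by rintro rfl; simp at hlc) tb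
  have hw : IsUnit (cont tb.dropLast) := hq.isUnit_cont_dropLast
  have hk : 1 ≤ tb.dropLast.length := by rw [List.length_dropLast]; omega
  refine ⟨j + u.length, tb.dropLast.length, hk, ?_⟩
  rw [hsplit] at hj
  rcases hj with hj | hj
  · have hlen := congrArg List.length hj
    simp only [List.length_append, List.length_rotate] at hlen
    exact ⟨by omega, .inl ((take_rotate_of_append_eq_rotate hj).symm ▸ hw)⟩
  · have hlen := congrArg List.length hj
    simp only [List.length_append, List.length_rotate, List.length_reverse] at hlen
    exact ⟨by omega, .inr ((take_rotate_of_append_eq_rotate hj).symm ▸ hw)⟩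

lemma not_isReducible_of_length_lt_four {l : List A} (hl : l.length < 4) : ¬ IsReducible l := by
  intro h
  obtain ⟨i, k, hk, hkl, -⟩ := h.exists_isUnit_cont_window
  omega

lemma isUnit_cont_window_map {B : Type*} [CommRing B] (f : A →+* B) {l : List A} {i k : ℕ}
    (h : IsUnit (cont ((l.rotate i).take k))) : IsUnit (cont (((l.map f).rotate i).take k)) := by
  rw [← List.map_rotate, ← List.map_take, cont_map]
  exact h.map f

lemma cont_replicate_two (a : ℕ) : cont (List.replicate a (2 : A)) = a + 1 := by
  rw [← Mlist_apply_zero_zero, Mlist_replicate_two]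
  simp

lemma cont_replicate_two_append (a : ℕ) (h : A) (t : List A) :
    cont (List.replicate a 2 ++ h :: t) = (a + 1) * cont (h :: t) - a * cont t := by
  obtain ⟨h0, h1⟩ := Mlist_cons_apply h t
  rw [← Mlist_apply_zero_zero, Mlist_append, Mlist_replicate_two]
  simp only [Fin.isValue, Matrix.mul_apply, of_apply, cons_val', cons_val_zero, cons_val_fin_one,
    Fin.sum_univ_two, h0, h1, cons_val_one, neg_mul]
  ring

lemma cont_one_cons_replicate_two (j : ℕ) : cont (1 :: List.replicate j (2 : A)) = 1 := by
  cases j with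
  | zero => rfl
  | succ j =>
    rw [List.replicate_succ, cont, ← List.replicate_succ, cont_replicate_two, cont_replicate_two]
    push_cast
    ring

end General

lemma isUnit_cont_take_replicate_two_append {a b k : ℕ} {x : ℤ} (hx : x = a + b + 1)
    (hk1 : 1 ≤ k) (hk : k ≤ a + b)
    (hu : IsUnit (cont ((List.replicate a 2 ++ 1 :: x :: 1 :: List.replicate b 2).take k))) :
    k = a + 1 := by
  rcases le_or_gt k a with hka | hka
  · rw [List.take_append_of_le_length (by simpa), List.take_replicate, min_eq_left hka,
      cont_replicate_two, Int.isUnit_iff] at hu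
    omega
  obtain ⟨t, rfl⟩ : ∃ t, k = a + (t + 1) := ⟨k - a - 1, by omega⟩
  rw [List.take_append, List.take_replicate, min_eq_right (by omega), List.length_replicate,
    Nat.add_sub_cancel_left] at hu
  rcases t with _ | _ | j
  · rfl
  · have hc : cont (List.replicate a 2 ++ [1, x]) = (b : ℤ) := by
      rw [cont_replicate_two_append]
      simp only [cont, hx, one_mul, add_sub_cancel_right]
      ring
    rw [List.take_succ_cons, List.take_succ_cons, List.take_zero, hc, Int.isUnit_iff] at hu
    omega
  · have hc : cont (List.replicate a 2 ++ 1 :: x :: 1 :: List.replicate j 2) = (b - 1 - j : ℤ) := by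
      rw [cont_replicate_two_append, cont, cont, cont_one_cons_replicate_two, cont_replicate_two, hx]
      ring
    rw [List.take_succ_cons, List.take_succ_cons, List.take_succ_cons, List.take_replicate,
      min_eq_left (by omega), hc, Int.isUnit_iff] at hu
    omega

def baseQuiddity (m : ℕ) : List ℤ := 1 :: ((m : ℤ) + 2) :: 1 :: List.replicate (m + 1) 2

@[simp] lemma baseQuiddity_length (m : ℕ) : (baseQuiddity m).length = m + 4 := by
  simp [baseQuiddity]

lemma Mlist_baseQuiddity (m : ℕ) : Mlist (baseQuiddity m) = -1 := by
  rw [baseQuiddity, Mlist_cons, Mlist_cons, Mlist_cons, Mlist_replicate_two]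
  ext i j
  fin_cases i <;> fin_cases j <;> simp [Matrix.mul_apply, Fin.sum_univ_two] <;> ring

lemma baseQuiddity_rotate_three_add {m r : ℕ} (hr : r ≤ m + 1) :
    (baseQuiddity m).rotate (3 + r) =
      List.replicate (m + 1 - r) 2 ++ 1 :: ((m : ℤ) + 2) :: 1 :: List.replicate r 2 := by
  rw [List.rotate_eq_drop_append_take (by simp; omega), add_comm]
  simp [baseQuiddity, List.drop_replicate, List.take_replicate, hr]

lemma not_isUnit_cont_take_baseQuiddity_rotate_one {m k : ℕ} (hk1 : 1 ≤ k) (hk : k ≤ m + 1) :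
    ¬ IsUnit (cont (((baseQuiddity m).rotate 1).take k)) := by
  obtain ⟨j, rfl⟩ : ∃ j, k = j + 1 := ⟨k - 1, by omega⟩
  simp only [baseQuiddity, List.rotate_cons_succ, List.rotate_zero, List.cons_append,
    List.take_succ_cons]
  rcases j with _ | j
  · rw [List.take_zero, cont, Int.isUnit_iff]
    omega
  · rw [List.take_succ_cons, List.take_append_of_le_length (by simp; omega), List.take_replicate,
      min_eq_left (by omega), cont, cont_one_cons_replicate_two, cont_replicate_two,
      Int.isUnit_iff]
    omega

lemma baseQuiddity_window_position {m k : ℕ} (hk1 : 1 ≤ k) (hk : k ≤ m + 1) (i : ℕ)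
    (hu : IsUnit (cont (((baseQuiddity m).rotate i).take k))) :
    (i : ZMod (m + 4)) = 2 ∨ (i : ZMod (m + 4)) + k = 1 := by
  have hwrap : ∀ r ≤ m + 1, IsUnit (cont (((baseQuiddity m).rotate (3 + r)).take k)) →
      ((3 + r : ℕ) : ZMod (m + 4)) + k = 1 := by
    intro r hr hu
    rw [baseQuiddity_rotate_three_add hr] at hu
    have hk' := isUnit_cont_take_replicate_two_append (by omega) hk1 (by omega) hu
    rw [← Nat.cast_add, show 3 + r + k = (m + 4) + 1 by omega, Nat.cast_add, ZMod.natCast_self,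
      zero_add, Nat.cast_one]
  rw [← List.rotate_mod, baseQuiddity_length] at hu
  rw [← ZMod.natCast_mod i]
  have hp : i % (m + 4) < m + 4 := Nat.mod_lt _ (by omega)
  generalize i % (m + 4) = p at hu hp ⊢
  rcases (by omega : p = 0 ∨ p = 1 ∨ p = 2 ∨ 3 ≤ p) with rfl | rfl | rfl | hp3
  · rw [List.rotate_zero, ← List.rotate_length (baseQuiddity m), baseQuiddity_length,
      show m + 4 = 3 + (m + 1) by omega] at hu
    have h0 : ((0 : ℕ) : ZMod (m + 4)) = ((3 + (m + 1) : ℕ) : ZMod (m + 4)) := by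
      rw [show 3 + (m + 1) = m + 4 by omega, ZMod.natCast_self, Nat.cast_zero]
    exact .inr (h0 ▸ hwrap (m + 1) le_rfl hu)
  · exact absurd hu (not_isUnit_cont_take_baseQuiddity_rotate_one hk1 hk)
  · exact .inl (by simp)
  · obtain ⟨r, rfl⟩ : ∃ r, p = 3 + r := ⟨p - 3, by omega⟩
    exact .inr (hwrap r (by omega) hu)

lemma natCast_ne_zero_of_pos_of_lt {n a : ℕ} (ha : 0 < a) (han : a < n) : (a : ZMod n) ≠ 0 := by
  rw [Ne, ZMod.natCast_eq_zero_iff]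
  exact Nat.not_dvd_of_pos_of_lt ha han

lemma baseQuiddity_not_adjacent_windows {m k : ℕ} (hk1 : 1 ≤ k) (hk : k ≤ m + 1) {s t : ℕ}
    (hst : (t : ZMod (m + 4)) = s + 1)
    (hs : IsUnit (cont (((baseQuiddity m).rotate s).take k)))
    (ht : IsUnit (cont (((baseQuiddity m).rotate t).take k))) : False := by
  have h1 : ((1 : ℕ) : ZMod (m + 4)) ≠ 0 := natCast_ne_zero_of_pos_of_lt one_pos (by omega)
  have hk0 : (k : ZMod (m + 4)) ≠ 0 := natCast_ne_zero_of_pos_of_lt hk1 (by omega)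
  have hk2 : ((k + 2 : ℕ) : ZMod (m + 4)) ≠ 0 := natCast_ne_zero_of_pos_of_lt (by omega) (by omega)
  push_cast at h1 hk2
  rcases baseQuiddity_window_position hk1 hk s hs with hs | hs <;>
    rcases baseQuiddity_window_position hk1 hk t ht with ht | ht
  · exact h1 (by linear_combination ht - hs - hst)
  · exact hk2 (by linear_combination ht - hs - hst)
  · exact hk0 (by linear_combination hs - ht + hst)
  · exact h1 (by linear_combination ht - hs - hst)

def irreducibleQuiddity (m : ℕ) : List (ℤ × ℤ) :=
  (1, 2) :: ((m : ℤ) + 2, 1) :: (1, (m : ℤ) + 2) :: (2, 1) :: List.replicate m (2, 2)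

lemma irreducibleQuiddity_map_fst (m : ℕ) :
    (irreducibleQuiddity m).map (RingHom.fst ℤ ℤ) = baseQuiddity m := by
  simp [irreducibleQuiddity, baseQuiddity, List.replicate_succ]

lemma irreducibleQuiddity_map_snd (m : ℕ) :
    (irreducibleQuiddity m).map (RingHom.snd ℤ ℤ) = (baseQuiddity m).rotate (m + 3) := by
  rw [List.rotate_eq_drop_append_take (by simp)]
  simp [irreducibleQuiddity, baseQuiddity, List.drop_replicate, List.take_replicate]

lemma irreducibleQuiddity_reverse_map_fst (m : ℕ) :
    (irreducibleQuiddity m).reverse.map (RingHom.fst ℤ ℤ) = (baseQuiddity m).rotate 3 := by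
  rw [List.rotate_eq_drop_append_take (by simp)]
  simp [irreducibleQuiddity, baseQuiddity, List.replicate_succ']

lemma irreducibleQuiddity_reverse_map_snd (m : ℕ) :
    (irreducibleQuiddity m).reverse.map (RingHom.snd ℤ ℤ) = (baseQuiddity m).rotate 4 := by
  rw [List.rotate_eq_drop_append_take (by simp)]
  simp [irreducibleQuiddity, baseQuiddity, List.drop_replicate, List.take_replicate]

lemma Mlist_irreducibleQuiddity (m : ℕ) : Mlist (irreducibleQuiddity m) = -1 := by
  have hfst : (RingHom.fst ℤ ℤ).mapMatrix (Mlist (irreducibleQuiddity m)) =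
      (RingHom.fst ℤ ℤ).mapMatrix (-1) := by
    rw [← Mlist_map, irreducibleQuiddity_map_fst, Mlist_baseQuiddity, map_neg, map_one]
  have hsnd : (RingHom.snd ℤ ℤ).mapMatrix (Mlist (irreducibleQuiddity m)) =
      (RingHom.snd ℤ ℤ).mapMatrix (-1) := by
    rw [← Mlist_map, irreducibleQuiddity_map_snd,
      Mlist_rotate_of_eq_neg_one (Mlist_baseQuiddity m), map_neg, map_one]
  ext i j
  · exact congr_fun₂ hfst i j
  · exact congr_fun₂ hsnd i j

lemma not_isReducible_irreducibleQuiddity (m : ℕ) : ¬ IsReducible (irreducibleQuiddity m) := by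
  intro h
  obtain ⟨i, k, hk1, hk, hu | hu⟩ := h.exists_isUnit_cont_window
  all_goals
    have hfst := isUnit_cont_window_map (RingHom.fst ℤ ℤ) hu
    have hsnd := isUnit_cont_window_map (RingHom.snd ℤ ℤ) hu
    simp only [irreducibleQuiddity_map_fst, irreducibleQuiddity_map_snd,
      irreducibleQuiddity_reverse_map_fst, irreducibleQuiddity_reverse_map_snd,
      List.rotate_rotate] at hfst hsnd
  · refine baseQuiddity_not_adjacent_windows hk1 ?_ ?_ hsnd hfst
    · simpa [irreducibleQuiddity] using hk
    · rw [← Nat.cast_add_one, show m + 3 + i + 1 = (m + 4) + i by omega, Nat.cast_add,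
        ZMod.natCast_self, zero_add]
  · refine baseQuiddity_not_adjacent_windows hk1 ?_ ?_ hfst hsnd
    · simpa [irreducibleQuiddity] using hk
    · push_cast
      ring

theorem stmt18 (n : ℕ) (hn : 3 ≤ n) :
    ∃ l : List (ℤ × ℤ), l.length = n ∧ (Mlist l = 1 ∨ Mlist l = -1) ∧
      (¬ ∃ (lb lc : List (ℤ × ℤ)), 3 ≤ lb.length ∧ 3 ≤ lc.length ∧
          (Mlist lb = 1 ∨ Mlist lb = -1) ∧
          (∃ j : ℕ, oplus lc lb = l.rotate j ∨ oplus lc lb = l.reverse.rotate j)) ∧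
      (4 ≤ n →
        l = ((1, 2) : ℤ × ℤ) :: (((n : ℤ) - 2, 1) : ℤ × ℤ) :: ((1, (n : ℤ) - 2) : ℤ × ℤ) ::
            ((2, 1) : ℤ × ℤ) :: List.replicate (n - 4) ((2, 2) : ℤ × ℤ)) := by
  rcases hn.eq_or_lt with rfl | hn
  · refine ⟨[(1, 1), (1, 1), (1, 1)], rfl, .inr ?_, not_isReducible_of_length_lt_four (by simp),
      by omega⟩
    ext i j <;> fin_cases i <;> fin_cases j <;> simp [Mlist, Matrix.mul_apply, Fin.sum_univ_two]
  obtain ⟨m, rfl⟩ : ∃ m, n = m + 4 := ⟨n - 4, by omega⟩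
  refine ⟨irreducibleQuiddity m, by simp [irreducibleQuiddity], .inr (Mlist_irreducibleQuiddity m),
    not_isReducible_irreducibleQuiddity m, fun _ => ?_⟩
  rw [irreducibleQuiddity, Nat.add_sub_cancel, show ((m + 4 : ℕ) : ℤ) - 2 = m + 2 by push_cast; ring]
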